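/- Let p be an odd prime, a a quadratic non-residue mod p, and f(x) = x_1² − a x_2² − p x_3² + a p x_4². Then for Re(α) > 0, ∫_{‖x‖_p > 1} |f(x)|_p^{−α−2} d⁴x = p^{−2α}(1 − p^{−2})(1 + p^{α})/(1 − p^{−2α}). -/

import Mathlib

open MeasureTheory Complex Classical Filter

variable (p : ℕ) [Fact p.Prime]

noncomputable instance : MeasurableSpace ℚ_[p] := borel _
instance : BorelSpace ℚ_[p] := ⟨rfl⟩
noncomputable instance (n : ℕ) : MeasurableSpace (Fin n → ℚ_[p]) := borel _
instance (n : ℕ) : BorelSpace (Fin n → ℚ_[p]) := ⟨rfl⟩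

/-- Haar measure on `ℚ_p` normalized so that `ℤ_p` (the closed unit ball) has measure 1. -/
noncomputable def haarQ : Measure ℚ_[p] :=
  Measure.addHaarMeasure ⟨⟨Metric.closedBall 0 1, isCompact_closedBall 0 1⟩,
    ⟨0, mem_interior_iff_mem_nhds.2 (Metric.closedBall_mem_nhds 0 one_pos)⟩⟩

/-- Haar measure on `ℚ_p^n` normalized so that `ℤ_p^n` has measure 1. -/
noncomputable def haarQn (n : ℕ) : Measure (Fin n → ℚ_[p]) :=
  Measure.addHaarMeasure ⟨⟨Metric.closedBall 0 1, isCompact_closedBall 0 1⟩,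
    ⟨0, mem_interior_iff_mem_nhds.2 (Metric.closedBall_mem_nhds 0 one_pos)⟩⟩

/-- The p-adic fractional part of `x` : the unique rational of the form `z / p^n`
lying in `[0,1)` with `x - r ∈ ℤ_p`. -/
noncomputable def padicFract (x : ℚ_[p]) : ℚ :=
  if h : ∃ r : ℚ, (∃ (z : ℤ) (n : ℕ), r = (z : ℚ) / (p : ℚ) ^ n) ∧ 0 ≤ r ∧ r < 1 ∧
      ‖x - (r : ℚ_[p])‖ ≤ 1 then h.choose else 0

/-- The standard additive character `χ(y) = exp(2 π i {y}_p)` of `ℚ_p`. -/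
noncomputable def stdChar (y : ℚ_[p]) : ℂ :=
  Complex.exp (2 * Real.pi * Complex.I * (padicFract p y : ℂ))

/-- A Bruhat–Schwartz (test) function: locally constant with compact support. -/
def IsBruhatSchwartz {E : Type*} [TopologicalSpace E] (φ : E → ℂ) : Prop :=
  IsLocallyConstant φ ∧ HasCompactSupport φ

/-- Fourier transform on `ℚ_p`. -/
noncomputable def fourier1 (φ : ℚ_[p] → ℂ) (ξ : ℚ_[p]) : ℂ :=
  ∫ x, stdChar p (-(ξ * x)) * φ x ∂haarQ p

/-- Fourier transform on `ℚ_p^n`. -/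
noncomputable def fourierN (n : ℕ) (φ : (Fin n → ℚ_[p]) → ℂ) (ξ : Fin n → ℚ_[p]) : ℂ :=
  ∫ x, stdChar p (-(∑ i, ξ i * x i)) * φ x ∂haarQn p n

/-- Inverse Fourier transform on `ℚ_p^n`. -/
noncomputable def fourierInvN (n : ℕ) (φ : (Fin n → ℚ_[p]) → ℂ) (x : Fin n → ℚ_[p]) : ℂ :=
  ∫ ξ, stdChar p (∑ i, x i * ξ i) * φ ξ ∂haarQn p n

/-- The elliptic quadratic form `f(x) = x₁² - a x₂² - p x₃² + a p x₄²`. -/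
noncomputable def Qf (a : ℤ) (x : Fin 4 → ℚ_[p]) : ℚ_[p] :=
  x 0 ^ 2 - (a : ℚ_[p]) * x 1 ^ 2 - (p : ℚ_[p]) * x 2 ^ 2 + (a : ℚ_[p]) * (p : ℚ_[p]) * x 3 ^ 2

/-- The dual elliptic quadratic form `f°(x) = a p x₁² - p x₂² - a x₃² + x₄²`. -/
noncomputable def QfCirc (a : ℤ) (x : Fin 4 → ℚ_[p]) : ℚ_[p] :=
  (a : ℚ_[p]) * (p : ℚ_[p]) * x 0 ^ 2 - (p : ℚ_[p]) * x 1 ^ 2 - (a : ℚ_[p]) * x 2 ^ 2 + x 3 ^ 2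

/-!
Write `f = (x₁² - a x₂²) - p (x₃² - a x₄²)`. Since `a` is not a square mod `p`, the binary form
is anisotropic: `|u² - a v²| = max(|u|, |v|)²`. The two summands of `f` therefore have norms
`p^(even)` and `p^(odd)` unless they vanish, so
`|f(x)| = max(max(|x₁|, |x₂|)², p⁻¹ max(|x₃|, |x₄|)²)`.
Hence `{|f| ≤ p^j}` is a box with radii `p^⌊j/2⌋, p^⌊j/2⌋, p^⌈j/2⌉, p^⌈j/2⌉` and volume `p^(2j)`
(a box of radius `p^(k+1)` in one coordinate is tiled by `p` translates of radius `p^k`).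
The region `‖x‖ > 1` is `{|f| > 1}`, its level sets `{|f| = p^(j+1)}` have volume
`p^(2j+2) - p^(2j)`, and the integral is a geometric series.
-/

open Pointwise ENNReal

theorem hasSum_integral_iUnion_of_eqOn_const {X E ι : Type*} [MeasurableSpace X]
    [NormedAddCommGroup E] [NormedSpace ℝ E] [CompleteSpace E] [Countable ι] {μ : Measure X}
    {s : ι → Set X} {f : X → E} {c : ι → E} (hs : ∀ i, MeasurableSet (s i))
    (hd : Pairwise (Function.onFun Disjoint s)) (hμ : ∀ i, μ (s i) ≠ ⊤)
    (hf : ∀ i, Set.EqOn f (fun _ => c i) (s i)) (hsum : Summable fun i => μ.real (s i) * ‖c i‖) :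
    HasSum (fun i => μ.real (s i) • c i) (∫ x in ⋃ i, s i, f x ∂μ) := by
  have hint (i : ι) : ∫ x in s i, f x ∂μ = μ.real (s i) • c i := by
    rw [setIntegral_congr_fun (hs i) (hf i), setIntegral_const]
  have hnorm (i : ι) : ∫ x in s i, ‖f x‖ ∂μ = μ.real (s i) * ‖c i‖ := by
    rw [setIntegral_congr_fun (hs i) fun x hx => congrArg norm (hf i hx), setIntegral_const,
      smul_eq_mul]
  have hon (i : ι) : IntegrableOn f (s i) μ :=
    (integrableOn_const (hμ i)).congr_fun (hf i).symm (hs i)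
  simpa only [hint] using hasSum_integral_iUnion hs hd
    (integrableOn_iUnion_of_summable_integral_norm hon (by simpa only [hnorm] using hsum))

lemma natCast_zpow_cpow (n j : ℕ) (s : ℂ) :
    (((n : ℝ) ^ ((j : ℤ) + 1) : ℝ) : ℂ) ^ s = ((n : ℂ) ^ s) ^ (j + 1) := by
  rw [← Complex.cpow_nat_mul, Complex.natCast_cpow_natCast_mul]
  norm_cast

instance (n : ℕ) : (haarQn p n).IsAddHaarMeasure := Measure.isAddHaarMeasure_addHaarMeasure _

def padicBox {n : ℕ} (k : Fin n → ℤ) : Set (Fin n → ℚ_[p]) :=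
  {x | ∀ i, ‖x i‖ ≤ (p : ℝ) ^ k i}

variable {p}

lemma natCast_zpow_ne_top (m : ℤ) : (p : ℝ≥0∞) ^ m ≠ ⊤ := by
  rw [← ENNReal.coe_natCast, ← ENNReal.coe_zpow (Nat.cast_ne_zero.2 (Fact.out : p.Prime).ne_zero)]
  exact ENNReal.coe_ne_top

lemma toReal_natCast_zpow (m : ℤ) : ((p : ℝ≥0∞) ^ m).toReal = (p : ℝ) ^ m := by
  rw [← ENNReal.coe_natCast, ← ENNReal.coe_zpow (Nat.cast_ne_zero.2 (Fact.out : p.Prime).ne_zero),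
    ENNReal.coe_toReal, NNReal.coe_zpow, NNReal.coe_natCast]

lemma one_lt_prime_cast : (1 : ℝ) < p := Nat.one_lt_cast.2 (Fact.out : p.Prime).one_lt

lemma prime_cast_pos : (0 : ℝ) < p := zero_lt_one.trans one_lt_prime_cast

lemma norm_natCast_cpow_lt_one {s : ℂ} (hs : s.re < 0) : ‖(p : ℂ) ^ s‖ < 1 := by
  rw [Complex.norm_natCast_cpow_of_pos (Fact.out : p.Prime).pos]
  exact Real.rpow_lt_one_of_one_lt_of_neg one_lt_prime_cast hs

lemma PadicInt.norm_lt_one_iff_toZMod_eq_zero (z : ℤ_[p]) : ‖z‖ < 1 ↔ PadicInt.toZMod z = 0 := by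
  rw [← PadicInt.mem_nonunits, ← IsLocalRing.mem_maximalIdeal, ← PadicInt.ker_toZMod,
    RingHom.mem_ker]

namespace Padic

lemma norm_eq_zpow_iff (y : ℚ_[p]) (m : ℤ) :
    ‖y‖ = (p : ℝ) ^ m ↔ ‖y‖ ≤ (p : ℝ) ^ m ∧ ¬‖y‖ ≤ (p : ℝ) ^ (m - 1) := by
  rcases eq_or_ne y 0 with rfl | hy
  · simp [(zpow_pos prime_cast_pos m).ne, (zpow_pos prime_cast_pos (m - 1)).le]
  rw [norm_eq_zpow_neg_valuation hy, zpow_right_inj₀ prime_cast_pos one_lt_prime_cast.ne',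
    zpow_le_zpow_iff_right₀ one_lt_prime_cast, zpow_le_zpow_iff_right₀ one_lt_prime_cast]
  omega

lemma one_lt_norm_iff (y : ℚ_[p]) : 1 < ‖y‖ ↔ ∃ j : ℕ, ‖y‖ = (p : ℝ) ^ ((j : ℤ) + 1) := by
  constructor
  · intro hy
    have hy0 : y ≠ 0 := by rintro rfl; norm_num at hy
    rw [norm_eq_zpow_neg_valuation hy0] at hy ⊢
    have hv : 0 < -y.valuation := (one_lt_zpow_iff_right₀ one_lt_prime_cast).1 hy
    exact ⟨(-y.valuation - 1).toNat, by rw [Int.toNat_of_nonneg (by omega)]; ring_nf⟩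
  · rintro ⟨j, hj⟩
    rw [hj]
    exact one_lt_zpow₀ one_lt_prime_cast (by omega)

lemma norm_sq_le_zpow_iff (y : ℚ_[p]) (j : ℤ) :
    ‖y‖ ^ 2 ≤ (p : ℝ) ^ j ↔ ‖y‖ ≤ (p : ℝ) ^ (j / 2) := by
  rcases eq_or_ne y 0 with rfl | hy
  · simp [(zpow_pos prime_cast_pos _).le]
  rw [norm_eq_zpow_neg_valuation hy, ← zpow_natCast, ← zpow_mul,
    zpow_le_zpow_iff_right₀ one_lt_prime_cast, zpow_le_zpow_iff_right₀ one_lt_prime_cast]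
  omega

lemma norm_mul_zpow_le_one_iff (y : ℚ_[p]) (m : ℤ) :
    ‖y * (p : ℚ_[p]) ^ m‖ ≤ 1 ↔ ‖y‖ ≤ (p : ℝ) ^ m := by
  rw [norm_mul, norm_p_zpow, zpow_neg, ← div_eq_mul_inv,
    div_le_one (zpow_pos prime_cast_pos _)]

lemma norm_sub_natCast_val_lt_one_iff (w : ℚ_[p]) (j : ZMod p) :
    ‖w - (j.val : ℚ_[p])‖ < 1 ↔ ∃ z : ℤ_[p], (z : ℚ_[p]) = w ∧ PadicInt.toZMod z = j := by
  have hZ (z : ℤ_[p]) : ‖(z : ℚ_[p]) - (j.val : ℚ_[p])‖ < 1 ↔ PadicInt.toZMod z = j := by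
    have h := PadicInt.norm_lt_one_iff_toZMod_eq_zero (z - (j.val : ℤ_[p]))
    simp only [map_sub, map_natCast, ZMod.natCast_zmod_val, sub_eq_zero, PadicInt.norm_def] at h
    rw [← h]
    push_cast
    rfl
  refine ⟨fun h => ?_, fun ⟨z, hz, hj⟩ => hz ▸ (hZ z).2 hj⟩
  have hw : ‖w‖ ≤ 1 := by
    simpa using (nonarchimedean (w - (j.val : ℚ_[p])) (j.val : ℚ_[p])).trans
      (max_le h.le (by simpa using norm_int_le_one (p := p) j.val))
  exact ⟨⟨w, hw⟩, rfl, (hZ ⟨w, hw⟩).1 h⟩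

/-- The translate `j p^-(κ+1) + closedBall 0 (p ^ κ)` containing `y` is the one indexed by the
leading digit `j` of `y`. -/
lemma norm_sub_digit_le_iff (y : ℚ_[p]) (κ : ℤ) (j : ZMod p) :
    ‖y - j.val * (p : ℚ_[p]) ^ (-(κ + 1))‖ ≤ (p : ℝ) ^ κ ↔
      ∃ z : ℤ_[p], (z : ℚ_[p]) = y * (p : ℚ_[p]) ^ (κ + 1) ∧ PadicInt.toZMod z = j := by
  have hp : (p : ℚ_[p]) ≠ 0 := Nat.cast_ne_zero.2 (Fact.out : p.Prime).ne_zero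
  have hscale : y - j.val * (p : ℚ_[p]) ^ (-(κ + 1)) =
      (y * (p : ℚ_[p]) ^ (κ + 1) - j.val) * (p : ℚ_[p]) ^ (-(κ + 1)) := by
    rw [sub_mul, mul_assoc, ← zpow_add₀ hp, add_neg_cancel, zpow_zero, mul_one]
  rw [← norm_sub_natCast_val_lt_one_iff, hscale, norm_mul, norm_p_zpow, neg_neg,
    ← le_div_iff₀ (zpow_pos prime_cast_pos _), ← zpow_sub₀ prime_cast_pos.ne',
    norm_le_pow_iff_norm_lt_pow_add_one]
  norm_num

lemma norm_le_zpow_add_one_iff_exists_digit (y : ℚ_[p]) (κ : ℤ) :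
    ‖y‖ ≤ (p : ℝ) ^ (κ + 1) ↔
      ∃ j : ZMod p, ‖y - j.val * (p : ℚ_[p]) ^ (-(κ + 1))‖ ≤ (p : ℝ) ^ κ := by
  simp only [norm_sub_digit_le_iff, ← norm_mul_zpow_le_one_iff y (κ + 1)]
  refine ⟨fun hy => ⟨_, ⟨_, hy⟩, rfl, rfl⟩, ?_⟩
  rintro ⟨_, z, hz, -⟩
  exact hz ▸ z.norm_le_one

lemma digit_unique {y : ℚ_[p]} {κ : ℤ} {j j' : ZMod p}
    (hj : ‖y - j.val * (p : ℚ_[p]) ^ (-(κ + 1))‖ ≤ (p : ℝ) ^ κ)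
    (hj' : ‖y - j'.val * (p : ℚ_[p]) ^ (-(κ + 1))‖ ≤ (p : ℝ) ^ κ) : j = j' := by
  obtain ⟨z, hz, rfl⟩ := (norm_sub_digit_le_iff y κ j).1 hj
  obtain ⟨z', hz', rfl⟩ := (norm_sub_digit_le_iff y κ j').1 hj'
  rw [PadicInt.ext (hz.trans hz'.symm)]

end Padic

section padicBox

variable {n : ℕ}

lemma isClosed_padicBox (k : Fin n → ℤ) : IsClosed (padicBox p k) := by
  simp only [padicBox, Set.ofPred_forall]
  exact isClosed_iInter fun i => isClosed_le (by fun_prop) continuous_const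

lemma padicBox_zero : padicBox p (0 : Fin n → ℤ) = Metric.closedBall 0 1 := by
  ext x
  simp [padicBox, pi_norm_le_iff_of_nonneg]

lemma padicBox_update_add_one (k : Fin n → ℤ) (i : Fin n) :
    padicBox p (Function.update k i (k i + 1)) =
      ⋃ j : ZMod p,
        (Pi.single i (j.val * (p : ℚ_[p]) ^ (-(k i + 1))) : Fin n → ℚ_[p]) +ᵥ padicBox p k := by
  ext x
  simp only [padicBox, Set.mem_iUnion, Set.mem_vadd_set_iff_neg_vadd_mem, Set.mem_ofPred_eq,
    vadd_eq_add]
  constructor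
  · intro hx
    obtain ⟨j, hj⟩ := (Padic.norm_le_zpow_add_one_iff_exists_digit (x i) (k i)).1
      (by simpa using hx i)
    refine ⟨j, fun t => ?_⟩
    rcases eq_or_ne t i with rfl | ht
    · simpa [neg_add_eq_sub] using hj
    · simpa [ht] using hx t
  · rintro ⟨j, hj⟩ t
    rcases eq_or_ne t i with rfl | ht
    · simpa using (Padic.norm_le_zpow_add_one_iff_exists_digit (x t) (k t)).2
        ⟨j, by simpa [neg_add_eq_sub] using hj t⟩
    · simpa [ht] using hj t

lemma pairwise_disjoint_vadd_padicBox (k : Fin n → ℤ) (i : Fin n) :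
    Pairwise (Function.onFun Disjoint fun j : ZMod p =>
      (Pi.single i (j.val * (p : ℚ_[p]) ^ (-(k i + 1))) : Fin n → ℚ_[p]) +ᵥ padicBox p k) := by
  intro j j' hne
  refine Set.disjoint_left.2 fun x hx hx' => hne (Padic.digit_unique (y := x i) (κ := k i) ?_ ?_)
  · simpa [neg_add_eq_sub] using (Set.mem_vadd_set_iff_neg_vadd_mem.1 hx) i
  · simpa [neg_add_eq_sub] using (Set.mem_vadd_set_iff_neg_vadd_mem.1 hx') i

lemma haarQn_padicBox_update_add_one (k : Fin n → ℤ) (i : Fin n) :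
    haarQn p n (padicBox p (Function.update k i (k i + 1))) = p * haarQn p n (padicBox p k) := by
  rw [padicBox_update_add_one, measure_iUnion (pairwise_disjoint_vadd_padicBox k i)
    fun _ => (isClosed_padicBox k).measurableSet.const_vadd _]
  simp [measure_vadd, ZMod.card]

lemma haarQn_padicBox_update_add (k : Fin n → ℤ) (i : Fin n) (d : ℤ) :
    haarQn p n (padicBox p (Function.update k i (k i + d))) =
      (p : ℝ≥0∞) ^ d * haarQn p n (padicBox p k) := by
  have hp0 : (p : ℝ≥0∞) ≠ 0 := Nat.cast_ne_zero.2 (Fact.out : p.Prime).ne_zero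
  have hstep (m : ℤ) : haarQn p n (padicBox p (Function.update k i (k i + (m + 1)))) =
      p * haarQn p n (padicBox p (Function.update k i (k i + m))) := by
    simpa [add_assoc] using
      haarQn_padicBox_update_add_one (p := p) (Function.update k i (k i + m)) i
  induction d using Int.induction_on with
  | zero => simp
  | succ m ih =>
    rw [hstep, ih, ← mul_assoc, ENNReal.zpow_add hp0 (natCast_ne_top p), zpow_one,
      mul_comm _ (p : ℝ≥0∞)]
  | pred m ih =>
    have hsplit := ENNReal.zpow_add hp0 (natCast_ne_top p) 1 (-(m : ℤ) - 1)
    rw [zpow_one, show 1 + (-(m : ℤ) - 1) = -m by ring] at hsplit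
    rw [← ENNReal.mul_right_inj hp0 (natCast_ne_top p), ← hstep, sub_add_cancel, ih, hsplit,
      mul_assoc]

theorem haarQn_padicBox (k : Fin n → ℤ) :
    haarQn p n (padicBox p k) = (p : ℝ≥0∞) ^ ∑ i, k i := by
  have hp0 : (p : ℝ≥0∞) ≠ 0 := Nat.cast_ne_zero.2 (Fact.out : p.Prime).ne_zero
  suffices ∀ s : Finset (Fin n),
      haarQn p n (padicBox p (s.piecewise k 0)) = (p : ℝ≥0∞) ^ ∑ i ∈ s, k i by
    simpa using this Finset.univ
  intro s
  induction s using Finset.induction_on with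
  | empty =>
    rw [Finset.piecewise_empty, padicBox_zero, Finset.sum_empty, zpow_zero]
    exact Measure.addHaarMeasure_self
  | insert j s hj ih =>
    have hupdate : (insert j s).piecewise k 0 =
        Function.update (s.piecewise k 0) j (s.piecewise k 0 j + k j) := by
      rw [Finset.piecewise_insert, Finset.piecewise_eq_of_notMem _ _ _ hj, Pi.zero_apply, zero_add]
    rw [hupdate, haarQn_padicBox_update_add, ih, Finset.sum_insert hj,
      ENNReal.zpow_add hp0 (natCast_ne_top p)]

end padicBox

namespace Padic

variable {a : ℤ}

lemma norm_intCast_eq_one_of_not_isSquare (ha : ¬IsSquare (a : ZMod p)) : ‖(a : ℚ_[p])‖ = 1 := by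
  refine (norm_int_le_one a).antisymm (not_lt.1 fun h => ha ?_)
  rw [(ZMod.intCast_zmod_eq_zero_iff_dvd a p).2 (norm_intCast_lt_one_iff.1 h)]
  exact IsSquare.zero

lemma norm_sq_sub_intCast_eq_one (ha : ¬IsSquare (a : ZMod p)) {w : ℚ_[p]} (hw : ‖w‖ = 1) :
    ‖w ^ 2 - a‖ = 1 := by
  have hle : ‖w ^ 2 - a‖ ≤ 1 := by
    rw [sub_eq_add_neg]
    refine (nonarchimedean _ _).trans ?_
    rw [norm_pow, hw, norm_neg, norm_intCast_eq_one_of_not_isSquare ha, one_pow, max_self]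
  obtain ⟨W, rfl⟩ : ∃ W : ℤ_[p], (W : ℚ_[p]) = w := ⟨⟨w, hw.le⟩, rfl⟩
  refine hle.antisymm (not_lt.1 fun h => ha ⟨PadicInt.toZMod W, ?_⟩)
  have h0 := (PadicInt.norm_lt_one_iff_toZMod_eq_zero (W ^ 2 - (a : ℤ_[p]))).1
    (by simpa [PadicInt.norm_def] using h)
  rw [map_sub, map_pow, map_intCast, sub_eq_zero] at h0
  rw [← h0, sq]

lemma norm_sq_sub_mul_sq (ha : ¬IsSquare (a : ZMod p)) (u v : ℚ_[p]) :
    ‖u ^ 2 - a * v ^ 2‖ = max (‖u‖ ^ 2) (‖v‖ ^ 2) := by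
  have hA := norm_intCast_eq_one_of_not_isSquare ha
  by_cases huv : ‖u‖ = ‖v‖
  · rcases eq_or_ne v 0 with rfl | hv
    · simp_all
    have hfac : u ^ 2 - a * v ^ 2 = ((u / v) ^ 2 - a) * v ^ 2 := by field_simp
    have hw : ‖u / v‖ = 1 := by rw [norm_div, huv, div_self (norm_ne_zero_iff.2 hv)]
    rw [hfac, norm_mul, norm_sq_sub_intCast_eq_one ha hw, one_mul, norm_pow, huv, max_self]
  · have hne : ‖u ^ 2‖ ≠ ‖-(a * v ^ 2)‖ := by
      rw [norm_neg, norm_mul, hA, one_mul, norm_pow, norm_pow]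
      exact fun h => huv ((pow_left_inj₀ (norm_nonneg u) (norm_nonneg v) two_ne_zero).1 h)
    rw [sub_eq_add_neg, add_eq_max_of_ne hne, norm_neg, norm_mul, hA, one_mul, norm_pow, norm_pow]

lemma norm_sq_ne_inv_mul_norm_sq {u : ℚ_[p]} (hu : u ≠ 0) (v : ℚ_[p]) :
    ‖u‖ ^ 2 ≠ (p : ℝ)⁻¹ * ‖v‖ ^ 2 := by
  rcases eq_or_ne v 0 with rfl | hv
  · simpa using hu
  rw [norm_eq_zpow_neg_valuation hu, norm_eq_zpow_neg_valuation hv, ← zpow_natCast, ← zpow_natCast,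
    ← zpow_mul, ← zpow_mul, ← zpow_neg_one, ← zpow_add₀ prime_cast_pos.ne',
    Ne, zpow_right_inj₀ prime_cast_pos one_lt_prime_cast.ne']
  omega

end Padic

variable {a : ℤ}

lemma continuous_Qf : Continuous (Qf p a) := by
  unfold Qf
  fun_prop

lemma norm_Qf (ha : ¬IsSquare (a : ZMod p)) (x : Fin 4 → ℚ_[p]) :
    ‖Qf p a x‖ = max (max (‖x 0‖ ^ 2) (‖x 1‖ ^ 2)) ((p : ℝ)⁻¹ * max (‖x 2‖ ^ 2) (‖x 3‖ ^ 2)) := by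
  have hsplit : Qf p a x = (x 0 ^ 2 - a * x 1 ^ 2) + -((p : ℚ_[p]) * (x 2 ^ 2 - a * x 3 ^ 2)) := by
    unfold Qf
    ring
  have h23 : ‖-((p : ℚ_[p]) * (x 2 ^ 2 - a * x 3 ^ 2))‖ =
      (p : ℝ)⁻¹ * max (‖x 2‖ ^ 2) (‖x 3‖ ^ 2) := by
    rw [norm_neg, norm_mul, Padic.norm_p, Padic.norm_sq_sub_mul_sq ha]
  rw [hsplit, ← Padic.norm_sq_sub_mul_sq ha, ← h23]
  by_cases hne : ‖x 0 ^ 2 - a * x 1 ^ 2‖ = ‖-((p : ℚ_[p]) * (x 2 ^ 2 - a * x 3 ^ 2))‖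
  · -- the two norms are `p ^ (even)` and `p ^ (odd)`, so they agree only when both vanish
    have hq : ‖x 0 ^ 2 - a * x 1 ^ 2‖ = 0 := by
      obtain ⟨u, hu⟩ : ∃ u : ℚ_[p], max (‖x 0‖ ^ 2) (‖x 1‖ ^ 2) = ‖u‖ ^ 2 :=
        (max_choice _ _).elim (fun h => ⟨_, h⟩) (fun h => ⟨_, h⟩)
      obtain ⟨v, hv⟩ : ∃ v : ℚ_[p], max (‖x 2‖ ^ 2) (‖x 3‖ ^ 2) = ‖v‖ ^ 2 :=
        (max_choice _ _).elim (fun h => ⟨_, h⟩) (fun h => ⟨_, h⟩)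
      rw [h23, Padic.norm_sq_sub_mul_sq ha, hu, hv] at hne
      rw [Padic.norm_sq_sub_mul_sq ha, hu]
      by_contra h0
      exact Padic.norm_sq_ne_inv_mul_norm_sq (fun hu0 => h0 (by simp [hu0])) v hne
    rw [← hne, hq, max_self]
    exact le_antisymm ((Padic.nonarchimedean _ _).trans (by rw [← hne, hq, max_self]))
      (norm_nonneg _)
  · exact Padic.add_eq_max_of_ne hne

/-- `/` is floor division on `ℤ`, so this is `(⌊j/2⌋, ⌊j/2⌋, ⌈j/2⌉, ⌈j/2⌉)`. -/
def sublevelExponents (j : ℤ) : Fin 4 → ℤ := ![j / 2, j / 2, (j + 1) / 2, (j + 1) / 2]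

lemma setOf_norm_Qf_le (ha : ¬IsSquare (a : ZMod p)) (j : ℤ) :
    {x | ‖Qf p a x‖ ≤ (p : ℝ) ^ j} = padicBox p (sublevelExponents j) := by
  ext x
  have hinv : ∀ t : ℝ, (p : ℝ)⁻¹ * t ≤ (p : ℝ) ^ j ↔ t ≤ (p : ℝ) ^ (j + 1) := fun t => by
    rw [inv_mul_le_iff₀ prime_cast_pos, zpow_add_one₀ prime_cast_pos.ne', mul_comm]
  simp [padicBox, sublevelExponents, norm_Qf ha, hinv, Padic.norm_sq_le_zpow_iff,
    Fin.forall_fin_succ, and_assoc]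

lemma haarQn_setOf_norm_Qf_le (ha : ¬IsSquare (a : ZMod p)) (j : ℤ) :
    haarQn p 4 {x | ‖Qf p a x‖ ≤ (p : ℝ) ^ j} = (p : ℝ≥0∞) ^ (2 * j) := by
  rw [setOf_norm_Qf_le ha, haarQn_padicBox]
  congr 1
  simp [sublevelExponents, Fin.sum_univ_four]
  omega

lemma measureReal_setOf_norm_Qf_eq (ha : ¬IsSquare (a : ZMod p)) (j : ℤ) :
    (haarQn p 4).real {x | ‖Qf p a x‖ = (p : ℝ) ^ j} =
      (p : ℝ) ^ (2 * j) - (p : ℝ) ^ (2 * j - 2) := by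
  have hdiff : {x | ‖Qf p a x‖ = (p : ℝ) ^ j} =
      {x | ‖Qf p a x‖ ≤ (p : ℝ) ^ j} \ {x | ‖Qf p a x‖ ≤ (p : ℝ) ^ (j - 1)} := by
    ext x
    exact Padic.norm_eq_zpow_iff _ _
  have hsub : {x | ‖Qf p a x‖ ≤ (p : ℝ) ^ (j - 1)} ⊆ {x | ‖Qf p a x‖ ≤ (p : ℝ) ^ j} :=
    fun x hx => hx.trans (zpow_le_zpow_right₀ one_lt_prime_cast.le (by omega))
  rw [hdiff, measureReal_sdiff hsub
    (by rw [setOf_norm_Qf_le ha]; exact (isClosed_padicBox _).measurableSet)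
    (by rw [haarQn_setOf_norm_Qf_le ha]; exact natCast_zpow_ne_top _),
    measureReal_def, measureReal_def, haarQn_setOf_norm_Qf_le ha, haarQn_setOf_norm_Qf_le ha,
    toReal_natCast_zpow, toReal_natCast_zpow, mul_sub_one]

lemma setOf_one_lt_norm_eq_iUnion (ha : ¬IsSquare (a : ZMod p)) :
    {x : Fin 4 → ℚ_[p] | 1 < ‖x‖} = ⋃ j : ℕ, {x | ‖Qf p a x‖ = (p : ℝ) ^ ((j : ℤ) + 1)} := by
  have hball := setOf_norm_Qf_le ha 0
  rw [show sublevelExponents 0 = 0 by decide, padicBox_zero, zpow_zero] at hball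
  ext x
  simp only [Set.mem_ofPred_eq, Set.mem_iUnion, ← Padic.one_lt_norm_iff, ← not_le]
  exact not_congr (by simpa using (Set.ext_iff.1 hball x).symm)

lemma integral_one_lt_norm_norm_Qf_cpow (ha : ¬IsSquare (a : ZMod p)) {s : ℂ} (hs : s.re < -2) :
    ∫ x in {x : Fin 4 → ℚ_[p] | 1 < ‖x‖}, (‖Qf p a x‖ : ℂ) ^ s ∂haarQn p 4 =
      ((p : ℂ) ^ 2 - 1) * (p : ℂ) ^ s * (1 - (p : ℂ) ^ (s + 2))⁻¹ := by
  have hp0 : (p : ℂ) ≠ 0 := Nat.cast_ne_zero.2 (Fact.out : p.Prime).ne_zero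
  have hr : ‖(p : ℂ) ^ (s + 2)‖ < 1 := norm_natCast_cpow_lt_one (by simp; linarith)
  have hterm (j : ℕ) : (haarQn p 4).real {x | ‖Qf p a x‖ = (p : ℝ) ^ ((j : ℤ) + 1)} •
      (((p : ℝ) ^ ((j : ℤ) + 1) : ℝ) : ℂ) ^ s =
      ((p : ℂ) ^ 2 - 1) * (p : ℂ) ^ s * ((p : ℂ) ^ (s + 2)) ^ j := by
    rw [measureReal_setOf_norm_Qf_eq ha, natCast_zpow_cpow, Complex.cpow_add _ _ hp0,
      Complex.cpow_two,
      show 2 * ((j : ℤ) + 1) = ((2 * j + 2 : ℕ) : ℤ) by push_cast; ring,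
      show ((2 * j + 2 : ℕ) : ℤ) - 2 = ((2 * j : ℕ) : ℤ) by push_cast; ring,
      zpow_natCast, zpow_natCast, Complex.real_smul]
    push_cast
    ring
  refine HasSum.unique ?_ ((hasSum_geometric_of_norm_lt_one hr).mul_left _)
  rw [setOf_one_lt_norm_eq_iUnion ha, ← funext hterm]
  refine hasSum_integral_iUnion_of_eqOn_const
    (fun j => (isClosed_eq (continuous_norm.comp continuous_Qf) continuous_const).measurableSet)
    (fun i j hij => Set.disjoint_left.2 fun x hi hj => hij ?_)
    (fun j => ne_top_of_le_ne_top (natCast_zpow_ne_top (2 * ((j : ℤ) + 1)))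
      ((measure_mono fun x (hx : ‖Qf p a x‖ = _) => hx.le).trans_eq (haarQn_setOf_norm_Qf_le ha _)))
    (fun j x hx => congrArg (fun t : ℝ => (t : ℂ) ^ s) hx) ?_
  · have hij := (show ‖Qf p a x‖ = _ from hi).symm.trans hj
    rw [zpow_right_inj₀ prime_cast_pos one_lt_prime_cast.ne'] at hij
    omega
  · refine ((summable_geometric_of_lt_one (norm_nonneg _) hr).mul_left
      ‖((p : ℂ) ^ 2 - 1) * (p : ℂ) ^ s‖).congr fun j => ?_
    rw [← norm_pow, ← norm_mul, ← hterm, norm_smul, Real.norm_of_nonneg measureReal_nonneg]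

theorem integral_outside_unit_ball_general (p : ℕ) [Fact p.Prime]
    (a : ℤ) (ha : legendreSym p a = -1) (α : ℂ) (hα : 0 < α.re) :
    ∫ x in {x : Fin 4 → ℚ_[p] | 1 < ‖x‖}, ((‖Qf p a x‖ : ℂ) ^ (-α - 2)) ∂haarQn p 4 =
      (p : ℂ) ^ (-2 * α) * (1 - (p : ℂ) ^ (-(2 : ℂ))) * (1 + (p : ℂ) ^ α) /
        (1 - (p : ℂ) ^ (-2 * α)) := by
  have hp0 : (p : ℂ) ≠ 0 := Nat.cast_ne_zero.2 (Fact.out : p.Prime).ne_zero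
  rw [integral_one_lt_norm_norm_Qf_cpow ((legendreSym.eq_neg_one_iff p).1 ha) (by simp; linarith),
    sub_add_cancel, Complex.cpow_sub _ _ hp0, show -2 * α = -α + -α by ring,
    Complex.cpow_add _ _ hp0, Complex.cpow_neg _ α, Complex.cpow_neg _ 2, Complex.cpow_two]
  set q := (p : ℂ) ^ α
  have hq : 1 < ‖q‖ := by
    rw [Complex.norm_natCast_cpow_of_pos (Fact.out : p.Prime).pos]
    exact Real.one_lt_rpow one_lt_prime_cast hα
  have hq0 : q ≠ 0 := norm_pos_iff.1 (one_pos.trans hq)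
  have hq1 : q - 1 ≠ 0 := fun h => by simp [sub_eq_zero.1 h] at hq
  have hq1' : q + 1 ≠ 0 := fun h => by simp [eq_neg_of_add_eq_zero_left h] at hq
  rw [show 1 - q⁻¹ * q⁻¹ = (q - 1) * (q + 1) / (q * q) by field_simp; ring]
  field_simp
  ring

/-- For `Re α > 0`,
`∫_{‖x‖ > 1} |f(x)|_p^{-α-2} d⁴x = p^{-2α}(1 - p^{-2})(1 + p^{α})/(1 - p^{-2α})`. -/
theorem integral_outside_unit_ball (p : ℕ) [Fact p.Prime] (hp : p ≠ 2)
    (a : ℤ) (ha : legendreSym p a = -1) (α : ℂ) (hα : 0 < α.re) :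
    ∫ x in {x : Fin 4 → ℚ_[p] | 1 < ‖x‖}, ((‖Qf p a x‖ : ℂ) ^ (-α - 2)) ∂haarQn p 4 =
      (p : ℂ) ^ (-2 * α) * (1 - (p : ℂ) ^ (-(2 : ℂ))) * (1 + (p : ℂ) ^ α) /
        (1 - (p : ℂ) ^ (-2 * α)) :=
  integral_outside_unit_ball_general p a ha α hα
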